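/- For any connected graph G of order n ≥ 2, 2n + γ_t(M(G)) ≤ γ_tc(M(G ∘ P_2)) ≤ 4n, where G ∘ P_2 is the 2-corona of G. -/

import Mathlib

/-!
Write `m_a`, `l_a` for the inner vertex and the leaf of the path attached at `a`, and
`e_a = a m_a`, `f_a = m_a l_a` for its edges; `G` has `n` vertices and `m` edges.

Upper bound: the `4n` pendant vertices and pendant edges totally dominate `M(G ∘ P₂)`, and their
complement induces a copy of `M(G)`, which is connected.

Lower bound: in `M(G ∘ P₂)` the leaf `l_a` is adjacent only to `f_a`, so every total dominating
set `D` contains all `f_a`. If at least two vertices lie outside `D`, connectivity of the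
complement gives each of them a neighbour outside `D`; hence `D` contains every `l_a`, and
contains `m_a` whenever it contains `e_a`. Sending `a` and `m_a` to `a`, a `G`-edge to itself and
`e_a` to some edge of `G` at `a` then maps `D` minus the `2n` vertices `l_a`, `f_a` onto a total
dominating set of `M(G)`. If at most one vertex lies outside `D`, then
`|D| ≥ 3n + (m + 2n) - 1`, while `γ_t(M(G)) ≤ n + m` because `G` has no isolated vertex.
-/

open SimpleGraph

/-- The middle graph `M(G)`: vertices are `V(G) ⊕ E(G)`; an edge-vertex is adjacent to
another edge-vertex iff the edges are distinct and share an endpoint, and a vertex is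
adjacent to an edge iff it is incident to it. -/
def middleGraph {V : Type*} (G : SimpleGraph V) : SimpleGraph (V ⊕ G.edgeSet) where
  Adj x y :=
    match x, y with
    | Sum.inl _, Sum.inl _ => False
    | Sum.inl v, Sum.inr e => v ∈ (e : Sym2 V)
    | Sum.inr e, Sum.inl v => v ∈ (e : Sym2 V)
    | Sum.inr e, Sum.inr f => e ≠ f ∧ ∃ v, v ∈ (e : Sym2 V) ∧ v ∈ (f : Sym2 V)
  symm := by
    constructor
    rintro (v|e) (w|f) h
    · exact h
    · exact h
    · exact h
    · exact ⟨h.1.symm, h.2.imp fun v hv => ⟨hv.2, hv.1⟩⟩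
  loopless := by
    constructor
    rintro (v|e) h
    · exact h
    · exact h.1 rfl

/-- `D` is a total dominating set of `G`: every vertex has a neighbour in `D`. -/
def IsTotalDomSet {V : Type*} (G : SimpleGraph V) (D : Set V) : Prop :=
  ∀ v : V, ∃ u ∈ D, G.Adj v u

/-- `D` is a total outer-connected dominating set of `G`: it is total dominating and
the subgraph induced on the complement of `D` is connected. -/
def IsTOCDomSet {V : Type*} (G : SimpleGraph V) (D : Set V) : Prop :=
  IsTotalDomSet G D ∧ (G.induce Dᶜ).Connected

/-- The total domination number `γₜ(G)`. -/
noncomputable def totalDomNum {V : Type*} (G : SimpleGraph V) : ℕ :=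
  sInf {k | ∃ D : Set V, IsTotalDomSet G D ∧ D.ncard = k}

/-- The total outer-connected domination number `γ_tc(G)`. -/
noncomputable def tocDomNum {V : Type*} (G : SimpleGraph V) : ℕ :=
  sInf {k | ∃ D : Set V, IsTOCDomSet G D ∧ D.ncard = k}

/-- The set of leaves (vertices of degree 1) of `G`. -/
def leafSet {V : Type*} (G : SimpleGraph V) : Set V :=
  {v | ∃ u, G.neighborSet v = {u}}

/-- The wheel graph with hub `none` and rim cycle on `Fin n`. -/
def wheelGraph (n : ℕ) : SimpleGraph (Option (Fin n)) where
  Adj x y :=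
    match x, y with
    | none, none => False
    | none, some _ => True
    | some _, none => True
    | some i, some j => (SimpleGraph.cycleGraph n).Adj i j
  symm := by
    constructor
    rintro (_|i) (_|j) h
    · exact h
    · exact h
    · exact h
    · exact (SimpleGraph.cycleGraph n).symm.symm _ _ h
  loopless := by
    constructor
    rintro (_|i) h
    · exact h
    · exact (SimpleGraph.cycleGraph n).loopless.irrefl i h

/-- The corona `G ∘ K₁`: to each vertex `a` of `G` (copy `Sum.inl a`) a pendant
vertex `Sum.inr a` is attached. -/
def corona {V : Type*} (G : SimpleGraph V) : SimpleGraph (V ⊕ V) where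
  Adj x y :=
    match x, y with
    | Sum.inl a, Sum.inl b => G.Adj a b
    | Sum.inl a, Sum.inr b => a = b
    | Sum.inr a, Sum.inl b => a = b
    | Sum.inr _, Sum.inr _ => False
  symm := by
    constructor
    rintro (a|a) (b|b) h
    · exact G.symm.symm _ _ h
    · exact h.symm
    · exact h.symm
    · exact h
  loopless := by
    constructor
    rintro (a|a) h
    · exact G.loopless.irrefl a h
    · exact h

/-- The 2-corona `G ∘ P₂`: to each vertex `a` of `G` (copy `Sum.inl a`) a path
`Sum.inl a — Sum.inr (Sum.inl a) — Sum.inr (Sum.inr a)` of length 2 is attached. -/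
def corona2 {V : Type*} (G : SimpleGraph V) : SimpleGraph (V ⊕ V ⊕ V) where
  Adj x y :=
    match x, y with
    | Sum.inl a, Sum.inl b => G.Adj a b
    | Sum.inl a, Sum.inr (Sum.inl b) => a = b
    | Sum.inr (Sum.inl a), Sum.inl b => a = b
    | Sum.inr (Sum.inl a), Sum.inr (Sum.inr b) => a = b
    | Sum.inr (Sum.inr a), Sum.inr (Sum.inl b) => a = b
    | _, _ => False
  symm := by
    constructor
    rintro (a|a|a) (b|b|b) h <;> first | exact G.symm.symm _ _ h | exact h.symm | exact h
  loopless := by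
    constructor
    rintro (a|a|a) h
    · exact G.loopless.irrefl a h
    · exact h
    · exact h

/-- The spider `S_{1,n,n}`: hub `none`, middle vertices `some (.inl i)`,
leaves `some (.inr i)`; the star `K_{1,n}` with every edge subdivided once. -/
def spiderGraph (n : ℕ) : SimpleGraph (Option (Fin n ⊕ Fin n)) where
  Adj x y :=
    match x, y with
    | none, some (Sum.inl _) => True
    | some (Sum.inl _), none => True
    | some (Sum.inl i), some (Sum.inr j) => i = j
    | some (Sum.inr i), some (Sum.inl j) => i = j
    | _, _ => False
  symm := by
    constructor
    rintro (_|i|i) (_|j|j) h <;> first | exact h.symm | exact h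
  loopless := by
    constructor
    rintro (_|i|i) h <;> exact h

/-- The friendship graph `Fₙ`: `n` triangles sharing the common vertex `none`. -/
def friendshipGraph (n : ℕ) : SimpleGraph (Option (Fin n × Fin 2)) where
  Adj x y :=
    match x, y with
    | none, some _ => True
    | some _, none => True
    | some (i, a), some (j, b) => i = j ∧ a ≠ b
    | none, none => False
  symm := by
    constructor
    rintro (_|⟨i,a⟩) (_|⟨j,b⟩) h <;> first | exact ⟨h.1.symm, h.2.symm⟩ | exact h
  loopless := by
    constructor
    rintro (_|⟨i,a⟩) h
    · exact h
    · exact h.2 rfl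

open Sum

section Domination

variable {V : Type*} {G : SimpleGraph V}

theorem totalDomNum_le_ncard {D : Set V} (hD : IsTotalDomSet G D) : totalDomNum G ≤ D.ncard :=
  Nat.sInf_le ⟨D, hD, rfl⟩

theorem tocDomNum_le_ncard {D : Set V} (hD : IsTOCDomSet G D) : tocDomNum G ≤ D.ncard :=
  Nat.sInf_le ⟨D, hD, rfl⟩

theorem le_tocDomNum {k : ℕ} {D₀ : Set V} (hD₀ : IsTOCDomSet G D₀)
    (h : ∀ D, IsTOCDomSet G D → k ≤ D.ncard) : k ≤ tocDomNum G := by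
  obtain ⟨D, hD, hcard⟩ :
      tocDomNum G ∈ {k | ∃ D : Set V, IsTOCDomSet G D ∧ D.ncard = k} :=
    Nat.sInf_mem ⟨_, D₀, hD₀, rfl⟩
  exact hcard ▸ h D hD

theorem IsTOCDomSet.exists_adj_notMem {D : Set V} (hD : IsTOCDomSet G D) (hnt : Dᶜ.Nontrivial)
    {x : V} (hx : x ∉ D) : ∃ y ∉ D, G.Adj x y := by
  have : Nontrivial ↥Dᶜ := hnt.coe_sort
  obtain ⟨y, hy⟩ := hD.2.preconnected.exists_adj_of_nontrivial ⟨x, hx⟩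
  exact ⟨y, y.2, hy⟩

end Domination

namespace SimpleGraph

variable {V W : Type*} {G : SimpleGraph V}

theorem Preconnected.reachable_of_adj {H : SimpleGraph W} (hG : G.Preconnected) {f : V → W}
    (hf : ∀ a b, G.Adj a b → H.Reachable (f a) (f b)) (a b : V) : H.Reachable (f a) (f b) := by
  obtain ⟨p⟩ := hG a b
  induction p with
  | nil => rfl
  | cons h _ ih => exact (hf _ _ h).trans ih

end SimpleGraph

section MiddleGraph

variable {V : Type*} {G : SimpleGraph V}

@[simp] theorem middleGraph_adj_inl_inl (v w : V) : ¬(middleGraph G).Adj (inl v) (inl w) := id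

@[simp] theorem middleGraph_adj_inl_inr (v : V) (e : G.edgeSet) :
    (middleGraph G).Adj (inl v) (inr e) ↔ v ∈ (e : Sym2 V) := Iff.rfl

@[simp] theorem middleGraph_adj_inr_inl (e : G.edgeSet) (v : V) :
    (middleGraph G).Adj (inr e) (inl v) ↔ v ∈ (e : Sym2 V) := Iff.rfl

@[simp] theorem middleGraph_adj_inr_inr (e f : G.edgeSet) :
    (middleGraph G).Adj (inr e) (inr f) ↔
      e ≠ f ∧ ∃ v, v ∈ (e : Sym2 V) ∧ v ∈ (f : Sym2 V) := Iff.rfl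

theorem isTotalDomSet_middleGraph_univ (h : ∀ v, ∃ w, G.Adj v w) :
    IsTotalDomSet (middleGraph G) Set.univ := by
  rintro (v | ⟨e, he⟩)
  · obtain ⟨w, hvw⟩ := h v
    exact ⟨inr ⟨s(v, w), hvw⟩, trivial, Sym2.mem_mk_left v w⟩
  · induction e using Sym2.ind with
    | _ v w => exact ⟨inl v, trivial, Sym2.mem_mk_left v w⟩

theorem totalDomNum_middleGraph_le [Finite V] (h : ∀ v, ∃ w, G.Adj v w) :
    totalDomNum (middleGraph G) ≤ Nat.card V + Nat.card G.edgeSet := by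
  simpa [Set.ncard_univ, Nat.card_sum] using
    totalDomNum_le_ncard (isTotalDomSet_middleGraph_univ h)

theorem middleGraph_connected (hG : G.Connected) : (middleGraph G).Connected := by
  have hroot : ∀ x, ∃ v, (middleGraph G).Reachable x (inl v) := by
    rintro (v | ⟨e, he⟩)
    · exact ⟨v, .rfl⟩
    · induction e using Sym2.ind with
      | _ v w =>
        have hv : (middleGraph G).Adj (inr ⟨s(v, w), he⟩) (inl v) := Sym2.mem_mk_left v w
        exact ⟨v, hv.reachable⟩
  have hinl : ∀ v w, (middleGraph G).Reachable (inl v) (inl w) :=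
    hG.preconnected.reachable_of_adj fun v w hvw => by
      have hv : (middleGraph G).Adj (inl v) (inr ⟨s(v, w), hvw⟩) := Sym2.mem_mk_left v w
      have hw : (middleGraph G).Adj (inl w) (inr ⟨s(v, w), hvw⟩) := Sym2.mem_mk_right v w
      exact hv.reachable.trans hw.reachable.symm
  refine (connected_iff _).2 ⟨fun x y => ?_, ⟨inl hG.nonempty.some⟩⟩
  obtain ⟨v, hv⟩ := hroot x
  obtain ⟨w, hw⟩ := hroot y
  exact hv.trans ((hinl v w).trans hw.symm)

end MiddleGraph

section Corona2

variable {V : Type*} (G : SimpleGraph V)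

def corona2Edge : G.edgeSet ⊕ V ⊕ V → (corona2 G).edgeSet
  | inl e => ⟨Sym2.map inl e, Hom.map_mem_edgeSet (⟨inl, id⟩ : G →g corona2 G) e.2⟩
  | inr (inl a) => ⟨s(inl a, inr (inl a)), rfl⟩
  | inr (inr a) => ⟨s(inr (inl a), inr (inr a)), rfl⟩

variable {G}

@[simp] theorem coe_corona2Edge_inl (e : G.edgeSet) :
    (corona2Edge G (inl e) : Sym2 (V ⊕ V ⊕ V)) = Sym2.map inl e := rfl

@[simp] theorem coe_corona2Edge_inr_inl (a : V) :
    (corona2Edge G (inr (inl a)) : Sym2 (V ⊕ V ⊕ V)) = s(inl a, inr (inl a)) := rfl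

@[simp] theorem coe_corona2Edge_inr_inr (a : V) :
    (corona2Edge G (inr (inr a)) : Sym2 (V ⊕ V ⊕ V)) = s(inr (inl a), inr (inr a)) := rfl

variable (G)

theorem corona2Edge_injective : Function.Injective (corona2Edge G) := by
  rintro (e | a | a) (f | b | b) h <;> rw [Subtype.ext_iff] at h
  · exact congrArg inl (Subtype.ext (Sym2.map.injective inl_injective h))
  all_goals first
    | simpa using congrArg (inr (inl a) ∈ ·) h
    | simpa using congrArg (inl a ∈ ·) h
    | simpa using congrArg (inr (inl b) ∈ ·) h
    | simpa using congrArg (inr (inr a) ∈ ·) h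

theorem corona2Edge_surjective : Function.Surjective (corona2Edge G) := by
  rintro ⟨e, he⟩
  induction e using Sym2.ind with
  | _ x y =>
    rcases x with a | a | a <;> rcases y with b | b | b <;> try cases he
    · exact ⟨inl ⟨s(a, b), he⟩, rfl⟩
    all_goals first
      | exact ⟨inr (inl a), rfl⟩ | exact ⟨inr (inr a), rfl⟩
      | exact ⟨inr (inl a), Subtype.ext Sym2.eq_swap⟩
      | exact ⟨inr (inr a), Subtype.ext Sym2.eq_swap⟩

noncomputable def corona2EdgeEquiv : G.edgeSet ⊕ V ⊕ V ≃ (corona2 G).edgeSet :=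
  Equiv.ofBijective _ ⟨corona2Edge_injective G, corona2Edge_surjective G⟩

theorem card_edgeSet_corona2 [Finite V] :
    Nat.card (corona2 G).edgeSet = Nat.card G.edgeSet + 2 * Nat.card V := by
  rw [← Nat.card_congr (corona2EdgeEquiv G), Nat.card_sum, Nat.card_sum]
  ring

variable {G}

theorem middleGraph_corona2_adj_leaf_iff {a : V} {u : (V ⊕ V ⊕ V) ⊕ (corona2 G).edgeSet} :
    (middleGraph (corona2 G)).Adj (inl (inr (inr a))) u ↔
      u = inr (corona2Edge G (inr (inr a))) := by
  rcases u with x | e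
  · simp
  · obtain ⟨k, rfl⟩ := corona2Edge_surjective G e
    rcases k with b | b | b <;> simp [(corona2Edge_injective G).eq_iff, eq_comm (a := b)]

theorem middleGraph_corona2_adj_mid_iff {a : V} {u : (V ⊕ V ⊕ V) ⊕ (corona2 G).edgeSet} :
    (middleGraph (corona2 G)).Adj (inl (inr (inl a))) u ↔
      u = inr (corona2Edge G (inr (inl a))) ∨ u = inr (corona2Edge G (inr (inr a))) := by
  rcases u with x | e
  · simp
  · obtain ⟨k, rfl⟩ := corona2Edge_surjective G e
    rcases k with b | b | b <;> simp [(corona2Edge_injective G).eq_iff, eq_comm (a := b)]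

variable (G)

def corona2Pendants : Set ((V ⊕ V ⊕ V) ⊕ (corona2 G).edgeSet) :=
  Set.range (Sum.map inr (corona2Edge G ∘ inr))

theorem ncard_corona2Pendants [Finite V] : (corona2Pendants G).ncard = 4 * Nat.card V := by
  rw [corona2Pendants, Set.ncard_range_of_injective
    (inr_injective.sumMap ((corona2Edge_injective G).comp inr_injective))]
  simp only [Nat.card_sum]
  ring

theorem isTotalDomSet_corona2Pendants :
    IsTotalDomSet (middleGraph (corona2 G)) (corona2Pendants G) := by
  rintro ((a | a | a) | e)
  · exact ⟨inr (corona2Edge G (inr (inl a))), ⟨inr (inl a), rfl⟩, by simp⟩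
  · exact ⟨inr (corona2Edge G (inr (inl a))), ⟨inr (inl a), rfl⟩, by simp⟩
  · exact ⟨inr (corona2Edge G (inr (inr a))), ⟨inr (inr a), rfl⟩, by simp⟩
  obtain ⟨k, rfl⟩ := corona2Edge_surjective G e
  rcases k with ⟨g, hg⟩ | a | a
  · induction g using Sym2.ind with
    | _ a b => exact ⟨inr (corona2Edge G (inr (inl a))), ⟨inr (inl a), rfl⟩,
        by simp [(corona2Edge_injective G).eq_iff]⟩
  all_goals exact ⟨inl (inr (inl a)), ⟨inl (inl a), rfl⟩, by simp⟩

def middleGraphEmbeddingCorona2 : middleGraph G ↪g middleGraph (corona2 G) where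
  toFun := Sum.map inl (corona2Edge G ∘ inl)
  inj' := inl_injective.sumMap ((corona2Edge_injective G).comp inl_injective)
  map_rel_iff' := by
    rintro (v | e) (w | f) <;> simp [(corona2Edge_injective G).eq_iff]

theorem compl_corona2Pendants :
    (corona2Pendants G)ᶜ = Set.range (middleGraphEmbeddingCorona2 G) := by
  ext x
  rcases x with (a | a | a) | e
  · simp [corona2Pendants, middleGraphEmbeddingCorona2]
  · simp [corona2Pendants, middleGraphEmbeddingCorona2]
  · simp [corona2Pendants, middleGraphEmbeddingCorona2]
  · obtain ⟨k, rfl⟩ := corona2Edge_surjective G e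
    rcases k with f | b | b <;>
      simp [corona2Pendants, middleGraphEmbeddingCorona2, (corona2Edge_injective G).eq_iff]

theorem isTOCDomSet_corona2Pendants (hG : G.Connected) :
    IsTOCDomSet (middleGraph (corona2 G)) (corona2Pendants G) := by
  refine ⟨isTotalDomSet_corona2Pendants G, ?_⟩
  rw [compl_corona2Pendants]
  exact (Embedding.isoInduceRange _).connected_iff.1 (middleGraph_connected hG)

end Corona2

section LowerBound

variable {V : Type*} {G : SimpleGraph V}

variable (G) in
def corona2OuterPendants : Set ((V ⊕ V ⊕ V) ⊕ (corona2 G).edgeSet) :=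
  Set.range (Sum.map (inr ∘ inr) (corona2Edge G ∘ inr ∘ inr))

@[simp] theorem inl_mem_corona2OuterPendants {x : V ⊕ V ⊕ V} :
    inl x ∈ corona2OuterPendants G ↔ ∃ a, inr (inr a) = x := by
  simp [corona2OuterPendants]

@[simp] theorem inr_corona2Edge_mem_corona2OuterPendants {k : G.edgeSet ⊕ V ⊕ V} :
    inr (corona2Edge G k) ∈ corona2OuterPendants G ↔ ∃ a, inr (inr a) = k := by
  simp [corona2OuterPendants, (corona2Edge_injective G).eq_iff]

theorem ncard_corona2OuterPendants [Finite V] :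
    (corona2OuterPendants G).ncard = 2 * Nat.card V := by
  rw [corona2OuterPendants, Set.ncard_range_of_injective ((inr_injective.comp inr_injective).sumMap
    ((corona2Edge_injective G).comp (inr_injective.comp inr_injective))), Nat.card_sum]
  ring

theorem IsTOCDomSet.corona2OuterPendants_subset {D : Set ((V ⊕ V ⊕ V) ⊕ (corona2 G).edgeSet)}
    (hD : IsTOCDomSet (middleGraph (corona2 G)) D) (hnt : Dᶜ.Nontrivial) :
    corona2OuterPendants G ⊆ D := by
  have hf : ∀ a, inr (corona2Edge G (inr (inr a))) ∈ D := fun a => by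
    obtain ⟨u, hu, hadj⟩ := hD.1 (inl (inr (inr a)))
    exact middleGraph_corona2_adj_leaf_iff.1 hadj ▸ hu
  rintro _ ⟨a | a, rfl⟩
  · by_contra hl
    obtain ⟨y, hy, hadj⟩ := hD.exists_adj_notMem hnt hl
    exact hy (middleGraph_corona2_adj_leaf_iff.1 hadj ▸ hf a)
  · exact hf a

theorem IsTOCDomSet.mid_mem_of_pendantEdge_mem {D : Set ((V ⊕ V ⊕ V) ⊕ (corona2 G).edgeSet)}
    (hD : IsTOCDomSet (middleGraph (corona2 G)) D) (hnt : Dᶜ.Nontrivial) {a : V}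
    (ha : inr (corona2Edge G (inr (inl a))) ∈ D) : inl (inr (inl a)) ∈ D := by
  by_contra hm
  obtain ⟨y, hy, hadj⟩ := hD.exists_adj_notMem hnt hm
  rcases middleGraph_corona2_adj_mid_iff.1 hadj with rfl | rfl
  · exact hy ha
  · exact hy (hD.corona2OuterPendants_subset hnt ⟨inr a, rfl⟩)

variable (G) in
noncomputable def corona2Proj (nbr : V → G.edgeSet) :
    (V ⊕ V ⊕ V) ⊕ (corona2 G).edgeSet → V ⊕ G.edgeSet
  | inl x => inl (Sum.elim id (Sum.elim id id) x)
  | inr e => inr (Sum.elim id (nbr ∘ Sum.elim id id) ((corona2EdgeEquiv G).symm e))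

@[simp] theorem corona2Proj_inl (nbr : V → G.edgeSet) (x : V ⊕ V ⊕ V) :
    corona2Proj G nbr (inl x) = inl (Sum.elim id (Sum.elim id id) x) := rfl

@[simp] theorem corona2Proj_inr_corona2Edge (nbr : V → G.edgeSet) (k : G.edgeSet ⊕ V ⊕ V) :
    corona2Proj G nbr (inr (corona2Edge G k)) = inr (Sum.elim id (nbr ∘ Sum.elim id id) k) := by
  change inr (Sum.elim id _ ((corona2EdgeEquiv G).symm (corona2EdgeEquiv G k))) = _
  rw [Equiv.symm_apply_apply]

theorem isTotalDomSet_image_corona2Proj {nbr : V → G.edgeSet}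
    (hnbr : ∀ a, a ∈ (nbr a : Sym2 V)) {D : Set ((V ⊕ V ⊕ V) ⊕ (corona2 G).edgeSet)}
    (hD : IsTotalDomSet (middleGraph (corona2 G)) D)
    (hmid : ∀ a, inr (corona2Edge G (inr (inl a))) ∈ D → inl (inr (inl a)) ∈ D) :
    IsTotalDomSet (middleGraph G) (corona2Proj G nbr '' (D \ corona2OuterPendants G)) := by
  rintro (a | e)
  · obtain ⟨u, hu, hadj⟩ := hD (inl (inl a))
    rcases u with x | f
    · simp at hadj
    obtain ⟨k, rfl⟩ := corona2Edge_surjective G f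
    rcases k with g | b | b <;> simp at hadj
    · exact ⟨inr g, ⟨_, ⟨hu, by simp⟩, by simp⟩,
        hadj⟩
    · subst hadj
      exact ⟨inr (nbr a), ⟨_, ⟨hu, by simp⟩,
        by simp⟩, hnbr a⟩
  · obtain ⟨u, hu, hadj⟩ := hD (inr (corona2Edge G (inl e)))
    rcases u with (c | c | c) | f <;> simp at hadj
    · exact ⟨inl c, ⟨_, ⟨hu, by simp⟩, rfl⟩, hadj⟩
    obtain ⟨k, rfl⟩ := corona2Edge_surjective G f
    rcases k with g | c | c <;> simp [(corona2Edge_injective G).eq_iff] at hadj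
    · exact ⟨inr g, ⟨_, ⟨hu, by simp⟩, by simp⟩,
        by simpa using hadj⟩
    · exact ⟨inl c, ⟨_, ⟨hmid c hu, by simp⟩, rfl⟩, hadj⟩

variable [Finite V] {D : Set ((V ⊕ V ⊕ V) ⊕ (corona2 G).edgeSet)}

theorem le_ncard_of_compl_subsingleton [Nonempty V] (hadj : ∀ v, ∃ w, G.Adj v w)
    (hs : Dᶜ.Subsingleton) :
    2 * Nat.card V + totalDomNum (middleGraph G) ≤ D.ncard := by
  have hsplit := Set.ncard_add_ncard_compl D
  have hcompl := Set.ncard_le_one_iff_subsingleton.2 hs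
  have hγ := totalDomNum_middleGraph_le hadj
  have hV := Nat.card_pos (α := V)
  rw [Nat.card_sum, Nat.card_sum, Nat.card_sum, card_edgeSet_corona2] at hsplit
  omega

theorem le_ncard_of_compl_nontrivial (hadj : ∀ v, ∃ w, G.Adj v w)
    (hD : IsTOCDomSet (middleGraph (corona2 G)) D) (hnt : Dᶜ.Nontrivial) :
    2 * Nat.card V + totalDomNum (middleGraph G) ≤ D.ncard := by
  choose w hw using hadj
  have hTDS := isTotalDomSet_image_corona2Proj (nbr := fun a => ⟨s(a, w a), hw a⟩)
    (fun a => Sym2.mem_mk_left a (w a)) hD.1 fun _ => hD.mid_mem_of_pendantEdge_mem hnt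
  calc 2 * Nat.card V + totalDomNum (middleGraph G)
      ≤ (corona2OuterPendants G).ncard + (D \ corona2OuterPendants G).ncard := by
        rw [ncard_corona2OuterPendants]
        exact Nat.add_le_add_left ((totalDomNum_le_ncard hTDS).trans (Set.ncard_image_le)) _
    _ = D.ncard := by
        rw [add_comm, Set.ncard_sdiff_add_ncard_of_subset (hD.corona2OuterPendants_subset hnt)]

end LowerBound

theorem stmt15 {V : Type*} [Fintype V] (G : SimpleGraph V) (hG : G.Connected)
    (hn : 2 ≤ Fintype.card V) :
    2 * Fintype.card V + totalDomNum (middleGraph G) ≤ tocDomNum (middleGraph (corona2 G)) ∧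
      tocDomNum (middleGraph (corona2 G)) ≤ 4 * Fintype.card V := by
  have : Nontrivial V := Fintype.one_lt_card_iff_nontrivial.1 hn
  have hadj : ∀ v, ∃ w, G.Adj v w := hG.preconnected.exists_adj_of_nontrivial
  have hP := isTOCDomSet_corona2Pendants G hG
  rw [← Nat.card_eq_fintype_card]
  refine ⟨le_tocDomNum hP fun D hD => ?_, ncard_corona2Pendants G ▸ tocDomNum_le_ncard hP⟩
  rcases Dᶜ.subsingleton_or_nontrivial with hs | hnt
  · exact le_ncard_of_compl_subsingleton hadj hs
  · exact le_ncard_of_compl_nontrivial hadj hD hnt
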